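/- There exists a trapezoid P in ℝ² for which no point p makes the four signed triangle areas Vol₂*(C_i(p)) (triangles over the four sides with apex p) all equal. -/

import Mathlib

/-!
For a trapezoid `v 0 v 1 v 2 v 3` with `v 2 - v 3 = t • (v 1 - v 0)`, write `S` for the area of
the triangle `v 0 v 1 v 2` and `Aᵢ(p)` for the signed area over the side `v i v (i+1)`.
For every apex `p` the four areas add up to the area `(1 + t) S` of the trapezoid, and the
two areas over the parallel sides satisfy `t A₀(p) + A₂(p) = t S`, since their heights add
up to the height of the trapezoid.
If all four areas equal `a`, then `4 a = (1 + t) S` and `(1 + t) a = t S`, so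
`(1 - t)² S = 0`: only a parallelogram admits an equal-area apex.
-/

/-- Twice-signed-area determinant of the pair of planar vectors `u`, `v`. -/
noncomputable def det2 (u v : EuclideanSpace ℝ (Fin 2)) : ℝ :=
  u 0 * v 1 - u 1 * v 0

/-- Signed area of the triangle with base the segment from `a` to `b` and apex `p`
(positive when `p` lies to the left of the oriented segment `a → b`, i.e. on the inner
side for a counterclockwise-oriented polygon). -/
noncomputable def signedArea (a b p : EuclideanSpace ℝ (Fin 2)) : ℝ :=
  det2 (b - a) (p - a) / 2

local notation "ℝ²" => EuclideanSpace ℝ (Fin 2)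

theorem signedArea_add_signedArea_add_signedArea_add_signedArea (a b c d p : ℝ²) :
    signedArea a b p + signedArea b c p + signedArea c d p + signedArea d a p =
      signedArea a b c + signedArea a c d := by
  simp only [signedArea, det2, PiLp.sub_apply]
  ring

section Parallel

variable {a b c d : ℝ²} {t : ℝ}

theorem mul_signedArea_add_signedArea_of_sub_eq_smul (h : c - d = t • (b - a)) (p : ℝ²) :
    t * signedArea a b p + signedArea c d p = t * signedArea a b c := by
  obtain rfl : d = c - t • (b - a) := by rw [← h, sub_sub_cancel]
  simp only [signedArea, det2, PiLp.sub_apply, PiLp.smul_apply, smul_eq_mul]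
  ring

theorem signedArea_eq_mul_signedArea_of_sub_eq_smul (h : c - d = t • (b - a)) :
    signedArea a c d = t * signedArea a b c := by
  obtain rfl : d = c - t • (b - a) := by rw [← h, sub_sub_cancel]
  simp only [signedArea, det2, PiLp.sub_apply, PiLp.smul_apply, smul_eq_mul]
  ring

end Parallel

theorem not_exists_equal_signedArea_of_trapezoid {v : Fin 4 → ℝ²} {t : ℝ}
    (hpar : v 2 - v 3 = t • (v 1 - v 0)) (ht : t ≠ 1) (hS : signedArea (v 0) (v 1) (v 2) ≠ 0) :
    ¬ ∃ p : ℝ²,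
      signedArea (v 0) (v 1) p = signedArea (v 1) (v 2) p ∧
      signedArea (v 1) (v 2) p = signedArea (v 2) (v 3) p ∧
      signedArea (v 2) (v 3) p = signedArea (v 3) (v 0) p := by
  rintro ⟨p, h01, h12, h23⟩
  set S := signedArea (v 0) (v 1) (v 2)
  set a := signedArea (v 0) (v 1) p
  have htotal : 4 * a = (1 + t) * S := by
    have := signedArea_add_signedArea_add_signedArea_add_signedArea (v 0) (v 1) (v 2) (v 3) p
    rw [signedArea_eq_mul_signedArea_of_sub_eq_smul hpar] at this
    linear_combination this + 3 * h01 + 2 * h12 + h23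
  have hparallel : (t + 1) * a = t * S := by
    linear_combination mul_signedArea_add_signedArea_of_sub_eq_smul hpar p + h01 + h12
  have hsq : (t - 1) ^ 2 * S = 0 := by
    linear_combination 4 * hparallel - (1 + t) * htotal
  rcases mul_eq_zero.mp hsq with h | h
  · exact ht (sub_eq_zero.mp (pow_eq_zero_iff two_ne_zero |>.mp h))
  · exact hS h

/-- **A trapezoid with no equal-area apex point.**
There exists a (counterclockwise oriented, convex, non-parallelogram) trapezoid with
vertices `v 0, v 1, v 2, v 3` for which no point `p` makes the four signed areas of the
triangles over its sides with apex `p` all equal. -/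
theorem exists_trapezoid_no_equal_area_point :
    ∃ v : Fin 4 → EuclideanSpace ℝ (Fin 2),
      (∃ t : ℝ, 0 < t ∧ t ≠ 1 ∧ v 2 - v 3 = t • (v 1 - v 0)) ∧
      (∀ i : Fin 4, 0 < signedArea (v i) (v (i + 1)) (v (i + 2))) ∧
      ¬ ∃ p : EuclideanSpace ℝ (Fin 2),
        signedArea (v 0) (v 1) p = signedArea (v 1) (v 2) p ∧
        signedArea (v 1) (v 2) p = signedArea (v 2) (v 3) p ∧
        signedArea (v 2) (v 3) p = signedArea (v 3) (v 0) p := by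
  set v : Fin 4 → ℝ² := ![!₂[0, 0], !₂[2, 0], !₂[1, 1], !₂[0, 1]]
  have hpar : v 2 - v 3 = (1 / 2 : ℝ) • (v 1 - v 0) := by
    ext i
    fin_cases i <;> simp [v]
  have hconvex : ∀ i : Fin 4, 0 < signedArea (v i) (v (i + 1)) (v (i + 2)) := by
    intro i
    fin_cases i <;> norm_num [v, signedArea, det2, Fin.add_def, Matrix.cons_val_two]
  refine ⟨v, ⟨1 / 2, by norm_num, by norm_num, hpar⟩, hconvex, ?_⟩
  exact not_exists_equal_signedArea_of_trapezoid hpar (by norm_num) (hconvex 0).ne'
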